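/- arXiv:2309.13678 — 3 statements merged into one kernel-verified Lean document; each statement's English description precedes it below -/
import Mathlib

section
/- Let n be even and suppose Signgiver has a strategy in the prefix-discrepancy game on [n] guaranteeing that at every time t and for every pair 1 ≤ i ≤ j ≤ n, |Σ_{h=i}^{j} x_h^t| − unq^t(i,j)/2 ≤ D′, where unq^t(i,j) is the number of coordinates in [i,j] still equal to 0 at time t (so the modified game value satisfies d′(n) ≤ D′). Then for d = D′ + 3 the function Disc-max-d satisfies E_{n/2}(Disc-max-d) ≤ 6d; that is, its deterministic query complexity is at least n − 6(D′ + 3). -/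
/-- A (binary) decision tree over ground set `[n]` (positions `Fin n`):
leaves are labelled with a Boolean output, inner nodes with a query `i ∈ [n]`;
the left subtree corresponds to the answer `i ∉ A`, the right one to `i ∈ A`. -/
inductive DecTree (n : ℕ) : Type
  | leaf : Bool → DecTree n
  | node : Fin n → DecTree n → DecTree n → DecTree n

namespace DecTree

/-- The height (depth) of a decision tree: the maximum number of queries on a
root-to-leaf path. -/
def depth {n : ℕ} : DecTree n → ℕ
  | leaf _ => 0
  | node _ t0 t1 => max (depth t0) (depth t1) + 1

/-- Evaluate a decision tree on an input set `A ⊆ [n]`. -/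
def eval {n : ℕ} : DecTree n → Finset (Fin n) → Bool
  | leaf b, _ => b
  | node i t0 t1, A => if i ∈ A then eval t1 A else eval t0 A

end DecTree

/-- The slice: the `k`-element subsets of `[n]`. -/
def Slice (n k : ℕ) : Type := {A : Finset (Fin n) // A.card = k}

/-- A decision tree computes `f` on the slice if it evaluates to `f A` for every
`A` in the slice. -/
def Computes {n k : ℕ} (T : DecTree n) (f : Slice n k → Bool) : Prop :=
  ∀ A : Slice n k, T.eval A.val = f A

/-- Deterministic query complexity of `f` on the slice: the minimum height of a
decision tree computing `f`. -/
noncomputable def Dquery (n k : ℕ) (f : Slice n k → Bool) : ℕ :=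
  sInf {d : ℕ | ∃ T : DecTree n, T.depth ≤ d ∧ Computes T f}

/-- `Dmax n k`: the maximum deterministic query complexity over all Boolean
functions on the slice of `k`-subsets of `[n]`. -/
noncomputable def Dmax (n k : ℕ) : ℕ :=
  sSup {d : ℕ | ∃ f : Slice n k → Bool, Dquery n k f = d}

/-- `Equery n k = n - Dmax n k`. -/
noncomputable def Equery (n k : ℕ) : ℕ := n - Dmax n k


/-- A Signgiver strategy in the prefix-discrepancy game on `[n]` (positions
`Fin n`): given the history of play (a list of (position, sign) pairs, most
recent first) and the position just queried by Positioner, it returns a sign. -/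
def SgStrategy (n : ℕ) : Type := List (Fin n × ℤ) → Fin n → ℤ

/-- A valid strategy always answers `+1` or `-1`. -/
def ValidStrategy {n : ℕ} (σ : SgStrategy n) : Prop :=
  ∀ h i, σ h i = 1 ∨ σ h i = -1

/-- The history of play produced by the strategy `σ` against the (chronological,
most recent first) list `qs` of positions queried by Positioner. -/
def playHist {n : ℕ} (σ : SgStrategy n) : List (Fin n) → List (Fin n × ℤ)
  | [] => []
  | q :: qs => (q, σ (playHist σ qs) q) :: playHist σ qs

/-- The value of the board at position `i` given the history `h`: the assigned
sign if `i` has been queried, and `0` otherwise. -/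
def boardVal {n : ℕ} (h : List (Fin n × ℤ)) (i : Fin n) : ℤ :=
  ((h.find? fun p => decide (p.1 = i)).map Prod.snd).getD 0

/-- The signed discrepancy `disc(j) = Σ_{i=1}^{j} x_i` of the prefix `[1,j]`
(positions of index `< j` in the 0-indexed board). -/
def prefixDisc {n : ℕ} (h : List (Fin n × ℤ)) (j : ℕ) : ℤ :=
  ∑ p ∈ Finset.univ.filter (fun p : Fin n => (p : ℕ) < j), boardVal h p

/-- The defining property of `Disc-max-d` for a subset `A ⊆ [n]`:
`| |A ∩ [j]| - j/2 | ≤ d/2` (written `|2·|A ∩ [j]| - j| ≤ d`) for all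
`1 ≤ j ≤ n`, where `A ∩ [j]` consists of the elements of `A` of index `< j`
in the 0-indexed ground set `Fin n`. -/
def DiscMaxProp (n d : ℕ) (A : Finset (Fin n)) : Prop :=
  ∀ j ∈ Finset.Icc 1 n,
    |2 * ((A.filter fun i : Fin n => (i : ℕ) < j).card : ℤ) - (j : ℤ)| ≤ (d : ℤ)

instance (n d : ℕ) (A : Finset (Fin n)) : Decidable (DiscMaxProp n d A) := by
  unfold DiscMaxProp; infer_instance

/-- The Boolean function `Disc-max-d` on subsets `A ⊆ [n]`. -/
def discMaxFun (n d : ℕ) (A : Finset (Fin n)) : Bool := decide (DiscMaxProp n d A)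

/-- The signed discrepancy `disc(i,j) = Σ_{h=i}^{j} x_h` of the (0-indexed)
interval `[i,j]` of the board given by the history `h`. -/
def intervalDisc {n : ℕ} (h : List (Fin n × ℤ)) (i j : ℕ) : ℤ :=
  ∑ p ∈ Finset.univ.filter (fun p : Fin n => i ≤ (p : ℕ) ∧ (p : ℕ) ≤ j), boardVal h p

/-- The number `unq(i,j)` of unqueried (value-0) positions of the board in the
(0-indexed) interval `[i,j]`. -/
def intervalUnq {n : ℕ} (h : List (Fin n × ℤ)) (i j : ℕ) : ℕ :=
  (Finset.univ.filter fun p : Fin n =>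
    i ≤ (p : ℕ) ∧ (p : ℕ) ≤ j ∧ boardVal h p = 0).card

/-!
Run a decision tree against Signgiver's strategy, each new query being answered by `σ`. If the
tree is shallower than `n - 6d`, more than `6D' + 18` cells are still blank at the leaf. With `F j`
the prefix discrepancy of the final board and `U j` the number of blanks among the first `j`
cells, filling the blanks along a `±1` walk `T` gives a set whose `j`-th prefix discrepancy is
`F j + T (U j)`; it lies in the middle slice iff `T` ends at `-F n`. The game guarantee makes `F`
roughly `1/2`-Lipschitz in `U`, so a McShane extension gives a walk with `|F + T ∘ U| ≤ D' + 1`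
everywhere, while the extreme walk reaching `±(D' + 4)` at the `(D' + 4)`-th blank gives a set
violating the bound `d`. Both sets agree with every answer, so the tree cannot tell them apart.
-/

open Finset

section PrefixSums

variable {n : ℕ} {M : Type*} [AddCommMonoid M]

lemma sum_filter_val_lt_succ (s : Finset (Fin n)) (g : Fin n → M) {j : ℕ} (hj : j < n) :
    ∑ p ∈ s with p.val < j + 1, g p =
      ∑ p ∈ s with p.val < j, g p + if ⟨j, hj⟩ ∈ s then g ⟨j, hj⟩ else 0 := by
  rw [sum_filter, sum_filter, ← sum_ite_eq' s ⟨j, hj⟩ g, ← sum_add_distrib]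
  refine sum_congr rfl fun p _ => ?_
  rcases lt_trichotomy p.val j with h | h | h
  · simp [h, Nat.lt_succ_of_lt h, Fin.ext_iff, h.ne]
  · simp [h, Fin.ext_iff]
  · simp [show ¬ p.val < j + 1 by omega, Fin.ext_iff, h.not_gt, h.ne']

lemma card_filter_val_lt_succ (s : Finset (Fin n)) {j : ℕ} (hj : j < n) :
    #{p ∈ s | p.val < j + 1} = #{p ∈ s | p.val < j} + if ⟨j, hj⟩ ∈ s then 1 else 0 := by
  simpa only [card_eq_sum_ones] using sum_filter_val_lt_succ s (fun _ => 1) hj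

lemma sum_filter_val_lt_add_sum_filter_interval (s : Finset (Fin n)) (g : Fin n → M)
    {i j : ℕ} (hij : i ≤ j + 1) :
    ∑ p ∈ s with p.val < i, g p + ∑ p ∈ s with i ≤ p.val ∧ p.val ≤ j, g p =
      ∑ p ∈ s with p.val < j + 1, g p := by
  rw [sum_filter, sum_filter, sum_filter, ← sum_add_distrib]
  refine sum_congr rfl fun p _ => ?_
  split_ifs <;> first | omega | simp

end PrefixSums

section Board

variable {n : ℕ} (h : List (Fin n × ℤ))

def unqueried : Finset (Fin n) := {p | boardVal h p = 0}

def unqBelow (j : ℕ) : ℕ := #{p ∈ unqueried h | p.val < j}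

lemma prefixDisc_zero : prefixDisc h 0 = 0 := by simp [prefixDisc]

lemma unqBelow_zero : unqBelow h 0 = 0 := by simp [unqBelow]

lemma prefixDisc_succ {j : ℕ} (hj : j < n) :
    prefixDisc h (j + 1) = prefixDisc h j + boardVal h ⟨j, hj⟩ := by
  rw [prefixDisc, prefixDisc, sum_filter_val_lt_succ _ _ hj, if_pos (mem_univ _)]

lemma unqBelow_succ {j : ℕ} (hj : j < n) :
    unqBelow h (j + 1) = unqBelow h j + if boardVal h ⟨j, hj⟩ = 0 then 1 else 0 := by
  simp only [unqBelow, card_filter_val_lt_succ _ hj, unqueried, mem_filter, mem_univ, true_and]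

lemma intervalDisc_eq_sub {i j : ℕ} (hij : i ≤ j) :
    intervalDisc h i j = prefixDisc h (j + 1) - prefixDisc h i := by
  rw [eq_sub_iff_add_eq']
  exact sum_filter_val_lt_add_sum_filter_interval univ (boardVal h) (by omega)

lemma intervalUnq_eq_sub {i j : ℕ} (hij : i ≤ j) :
    (intervalUnq h i j : ℤ) = unqBelow h (j + 1) - unqBelow h i := by
  have hsplit :=
    sum_filter_val_lt_add_sum_filter_interval (unqueried h) (fun _ => 1) (by omega : i ≤ j + 1)
  simp only [← card_eq_sum_ones] at hsplit
  have hUnq : intervalUnq h i j = #{p ∈ unqueried h | i ≤ p.val ∧ p.val ≤ j} := by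
    unfold intervalUnq unqueried
    rw [filter_filter]
    congr 1; ext p; simp only [mem_filter, mem_univ, true_and]; tauto
  rw [hUnq, unqBelow, unqBelow, ← hsplit]
  push_cast; ring

lemma prefix_bound_of_interval_bound {D : ℕ}
    (H : ∀ i j : ℕ, i ≤ j → j < n →
      2 * |intervalDisc h i j| - (intervalUnq h i j : ℤ) ≤ 2 * (D : ℤ))
    {a b : ℕ} (hab : a ≤ b) (hb : b ≤ n) :
    2 * |prefixDisc h b - prefixDisc h a| ≤ (unqBelow h b - unqBelow h a : ℤ) + 2 * D := by
  rcases hab.eq_or_lt with rfl | hlt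
  · simp
  · obtain ⟨j, rfl⟩ : ∃ j, b = j + 1 := ⟨b - 1, by omega⟩
    have := H a j (by omega) (by omega)
    rw [intervalDisc_eq_sub h (by omega), intervalUnq_eq_sub h (by omega)] at this
    linarith

end Board

def HasUnitSteps (T : ℕ → ℤ) : Prop := ∀ m, T (m + 1) = T m + 1 ∨ T (m + 1) = T m - 1

section Completion

variable {n : ℕ} (h : List (Fin n × ℤ))

def Agrees (A : Finset (Fin n)) : Prop :=
  ∀ p, boardVal h p ≠ 0 → boardVal h p = if p ∈ A then 1 else -1

lemma Agrees.mem_iff {h : List (Fin n × ℤ)} {A : Finset (Fin n)} (hA : Agrees h A) {p : Fin n}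
    (hp : boardVal h p ≠ 0) : p ∈ A ↔ boardVal h p = 1 := by
  have := hA p hp
  split_ifs at this with hpA <;> simp [hpA, this]

/-- Fills the unqueried cells from left to right with the steps of the walk `T`: the one preceded
by `m` unqueried cells goes into the set iff `T` steps up at `m`. -/
def completion (T : ℕ → ℤ) : Finset (Fin n) :=
  {p | boardVal h p = 1 ∨ (boardVal h p = 0 ∧ T (unqBelow h p + 1) = T (unqBelow h p) + 1)}

lemma agrees_completion (hx : ∀ p, boardVal h p = 0 ∨ boardVal h p = 1 ∨ boardVal h p = -1)
    (T : ℕ → ℤ) : Agrees h (completion h T) := by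
  intro p hp
  rcases hx p with h0 | h1 | h1 <;> simp_all [completion]

lemma two_mul_card_filter_completion_sub
    (hx : ∀ p, boardVal h p = 0 ∨ boardVal h p = 1 ∨ boardVal h p = -1)
    {T : ℕ → ℤ} (hT : HasUnitSteps T) {j : ℕ} (hj : j ≤ n) :
    2 * (#{p ∈ completion h T | p.val < j} : ℤ) - j =
      prefixDisc h j + (T (unqBelow h j) - T 0) := by
  induction j with
  | zero => simp [prefixDisc_zero, unqBelow_zero]
  | succ j ih =>
    have hjn : j < n := by omega
    specialize ih (by omega)
    rw [card_filter_val_lt_succ _ hjn, prefixDisc_succ h hjn, unqBelow_succ h hjn]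
    have hmem : (⟨j, hjn⟩ : Fin n) ∈ completion h T ↔ boardVal h ⟨j, hjn⟩ = 1 ∨
        (boardVal h ⟨j, hjn⟩ = 0 ∧ T (unqBelow h j + 1) = T (unqBelow h j) + 1) := by
      simp [completion]
    rcases hx ⟨j, hjn⟩ with h0 | h1 | h1
    · rcases hT (unqBelow h j) with hs | hs
      · rw [if_pos (hmem.2 (.inr ⟨h0, hs⟩)), if_pos h0, hs]; push_cast; linarith
      · rw [if_neg (by rw [hmem, hs]; omega), if_pos h0, hs]; push_cast; linarith
    · rw [if_pos (hmem.2 (.inl h1)), if_neg (by omega), h1]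
      simp only [add_zero]; push_cast; linarith
    · rw [if_neg (by rw [hmem, h1]; omega), if_neg (by omega), h1]
      simp only [add_zero]; push_cast; linarith

lemma card_completion (hx : ∀ p, boardVal h p = 0 ∨ boardVal h p = 1 ∨ boardVal h p = -1)
    {T : ℕ → ℤ} (hT : HasUnitSteps T) (hT0 : T 0 = 0)
    (hTn : T (unqBelow h n) = -prefixDisc h n) : #(completion h T) = n / 2 := by
  have := two_mul_card_filter_completion_sub h hx hT le_rfl
  rw [filter_true_of_mem fun p _ => p.isLt, hTn, hT0] at this
  omega

lemma even_unqBelow_add_prefixDisc (hn : Even n)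
    (hx : ∀ p, boardVal h p = 0 ∨ boardVal h p = 1 ∨ boardVal h p = -1) :
    Even ((unqBelow h n : ℤ) + prefixDisc h n) := by
  -- complete along the walk `m ↦ m`, for which `2 #A - n = s + u`
  have := two_mul_card_filter_completion_sub h hx (T := fun m => m)
    (fun m => .inl (by push_cast; ring)) le_rfl
  rw [filter_true_of_mem fun p _ => p.isLt] at this
  obtain ⟨m, hm⟩ := hn
  exact ⟨#(completion h fun m => (m : ℤ)) - m, by push_cast at this; omega⟩

end Completion

section Walks

lemma exists_lipschitz_near {ι : Type*} (s : Finset ι) (k : ι → ℕ) (c : ι → ℤ) (r : ι → ℕ)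
    (hc : ∀ i ∈ s, ∀ j ∈ s, c i - c j ≤ |(k i : ℤ) - k j| + r i + r j) :
    ∃ M : ℕ → ℤ, (∀ m, |M (m + 1) - M m| ≤ 1) ∧ ∀ i ∈ s, |M (k i) - c i| ≤ r i := by
  rcases s.eq_empty_or_nonempty with rfl | hs
  · exact ⟨0, by simp, by simp⟩
  -- McShane's extension: the least 1-Lipschitz function that is at least `c - r` on `s`
  let M : ℕ → ℤ := fun m => s.sup' hs fun i => c i - r i - |(m : ℤ) - k i|
  have hlip : ∀ m m' : ℕ, M m ≤ M m' + |(m : ℤ) - m'| := fun m m' =>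
    sup'_le _ _ fun i hi => by
      have : c i - r i - |(m' : ℤ) - k i| ≤ M m' :=
        le_sup' (fun i => c i - r i - |(m' : ℤ) - k i|) hi
      have := abs_sub_le (m' : ℤ) m (k i)
      rw [abs_sub_comm (m' : ℤ) m] at this
      linarith
  refine ⟨M, fun m => abs_le.2 ⟨?_, ?_⟩, fun i hi => abs_le.2 ⟨?_, ?_⟩⟩
  · have := hlip m (m + 1)
    rw [Nat.cast_succ, sub_add_cancel_left, abs_neg, abs_one] at this
    linarith
  · have := hlip (m + 1) m
    rw [Nat.cast_succ, add_sub_cancel_left, abs_one] at this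
    linarith
  · have : c i - r i - |((k i : ℕ) : ℤ) - k i| ≤ M (k i) :=
      le_sup' (fun j => c j - r j - |((k i : ℕ) : ℤ) - k j|) hi
    simp only [sub_self, abs_zero, sub_zero] at this
    linarith
  · suffices M (k i) ≤ c i + r i by linarith
    refine sup'_le _ _ fun j hj => ?_
    have := hc j hj i hi
    rw [abs_sub_comm] at this
    linarith

lemma exists_hasUnitSteps_near (M : ℕ → ℤ) (hM : ∀ m, |M (m + 1) - M m| ≤ 1) :
    ∃ T : ℕ → ℤ, HasUnitSteps T ∧ ∀ m, M m ≤ T m ∧ T m ≤ M m + 1 ∧ Even (T m + m) := by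
  refine ⟨fun m => M m + (M m + m) % 2, fun m => ?_, fun m => ⟨?_, ?_, ?_⟩⟩ <;> dsimp only
  · have := abs_le.1 (hM m); push_cast; omega
  · omega
  · omega
  · rw [Int.even_iff]; omega

lemma two_mul_abs_sub_le_of_forall_le {n D : ℕ} {F : ℕ → ℤ} {U : ℕ → ℕ}
    (H : ∀ a b, a ≤ b → b ≤ n → 2 * |F b - F a| ≤ (U b - U a : ℤ) + 2 * D)
    {a b : ℕ} (ha : a ≤ n) (hb : b ≤ n) : 2 * |F a - F b| ≤ |(U a : ℤ) - U b| + 2 * D := by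
  rcases le_total a b with hab | hab
  · rw [abs_sub_comm (F a), abs_sub_comm (U a : ℤ)]
    exact (H a b hab hb).trans (by gcongr; exact le_abs_self _)
  · exact (H b a hab ha).trans (by gcongr; exact le_abs_self _)

lemma exists_good_walk {n D : ℕ} (F : ℕ → ℤ) (U : ℕ → ℕ) (hF0 : F 0 = 0) (hU0 : U 0 = 0)
    (hUn : 2 * D ≤ U n) (hpar : Even ((U n : ℤ) + F n))
    (H : ∀ a b, a ≤ b → b ≤ n → 2 * |F b - F a| ≤ (U b - U a : ℤ) + 2 * D) :
    ∃ T : ℕ → ℤ, HasUnitSteps T ∧ T 0 = 0 ∧ T (U n) = -F n ∧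
      ∀ j ≤ n, |F j + T (U j)| ≤ D + 1 := by
  -- zero tolerance at the two ends pins down `T 0` and `T (U n)`
  let r : ℕ → ℕ := fun j => if j = 0 ∨ j = n then 0 else D
  obtain ⟨M, hMlip, hM⟩ := exists_lipschitz_near (range (n + 1)) U (fun j => -F j) r (by
    intro i hi j hj
    rw [mem_range] at hi hj
    have := two_mul_abs_sub_le_of_forall_le H (a := i) (b := j) (by omega) (by omega)
    have := le_abs_self (F j - F i)
    rw [abs_sub_comm] at this
    have := abs_nonneg ((U i : ℤ) - U j)
    simp only [r]
    split_ifs with hi0 hj0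
    · obtain rfl | hfar : i = j ∨ 2 * (D : ℤ) ≤ |(U i : ℤ) - U j| := by
        rcases hi0 with rfl | rfl <;> rcases hj0 with rfl | rfl <;>
          simp only [hU0, Nat.cast_zero, sub_self, zero_sub, sub_zero, abs_zero, abs_neg,
            Nat.abs_cast, true_or] <;> omega
      · simp
      · omega
    all_goals omega)
  obtain ⟨T, hT, hTM⟩ := exists_hasUnitSteps_near M hMlip
  have hrD : ∀ j, r j ≤ D := fun j => by simp only [r]; split_ifs <;> omega
  refine ⟨T, hT, ?_, ?_, fun j hj => ?_⟩
  · have h0 := abs_le.1 (hM 0 (by simp))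
    have hT0 := hTM 0
    simp only [r, hU0, hF0, true_or, if_true, Int.even_iff] at h0 hT0
    omega
  · have hn := abs_le.1 (hM n (by simp))
    have hTn := hTM (U n)
    simp only [r, or_true, if_true, Int.even_iff] at hn hTn
    rw [Int.even_iff] at hpar
    omega
  · have hj := abs_le.1 (hM j (mem_range.2 (by omega)))
    have := hTM (U j)
    have := hrD j
    rw [abs_le]; constructor <;> omega

lemma exists_walk_far (u k : ℕ) (s x : ℤ) (hk : 2 * k + |s| ≤ u) (hpar : Even (u + s)) :
    ∃ T : ℕ → ℤ, HasUnitSteps T ∧ T 0 = 0 ∧ T u = -s ∧ (k : ℤ) ≤ |x + T k| := by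
  -- the highest (if `x ≥ 0`) or lowest (if `x < 0`) walk from `(0, 0)` to `(u, -s)`
  obtain ⟨e, he, hex⟩ : ∃ e : ℤ, (e = 1 ∨ e = -1) ∧ 0 ≤ e * x := by
    rcases le_total 0 x with hx | hx
    exacts [⟨1, .inl rfl, by simpa⟩, ⟨-1, .inr rfl, by simpa⟩]
  have := le_abs_self s
  have := neg_abs_le s
  rw [Int.even_iff] at hpar
  refine ⟨fun m => e * min (m : ℤ) (u - e * s - m), fun m => ?_, ?_, ?_, ?_⟩ <;>
    rcases he with rfl | rfl <;> simp only [one_mul, neg_one_mul] at hex ⊢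
  any_goals omega
  · rw [min_eq_left (by omega)]; exact le_abs.2 (.inl (by omega))
  · rw [min_eq_left (by omega)]; exact le_abs.2 (.inr (by omega))

end Walks

lemma exists_eq_of_succ_le {U : ℕ → ℕ} {n k : ℕ} (hU : ∀ j < n, U (j + 1) ≤ U j + 1)
    (h0 : U 0 ≤ k) (hk : k ≤ U n) : ∃ j ≤ n, U j = k := by
  induction n with
  | zero => exact ⟨0, le_rfl, by omega⟩
  | succ n ih =>
    by_cases hkn : k ≤ U n
    · obtain ⟨j, hj, hUj⟩ := ih (fun j hj => hU j (by omega)) hkn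
      exact ⟨j, by omega, hUj⟩
    · exact ⟨n + 1, le_rfl, by have := hU n (by omega); omega⟩

theorem exists_agrees_discMaxProp_and_not {n D : ℕ} (hn : Even n) (h : List (Fin n × ℤ))
    (hx : ∀ p, boardVal h p = 0 ∨ boardVal h p = 1 ∨ boardVal h p = -1)
    (hu : 6 * D + 16 ≤ unqBelow h n)
    (H : ∀ a b, a ≤ b → b ≤ n →
      2 * |prefixDisc h b - prefixDisc h a| ≤ (unqBelow h b - unqBelow h a : ℤ) + 2 * D) :
    ∃ A B : Finset (Fin n), #A = n / 2 ∧ #B = n / 2 ∧ Agrees h A ∧ Agrees h B ∧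
      DiscMaxProp n (D + 3) A ∧ ¬ DiscMaxProp n (D + 3) B := by
  set u := unqBelow h n
  set s := prefixDisc h n
  have hkey {T : ℕ → ℤ} (hT : HasUnitSteps T) {j : ℕ} (hj : j ≤ n) :=
    two_mul_card_filter_completion_sub h hx hT hj
  have hpar := even_unqBelow_add_prefixDisc h hn hx
  have hs : 2 * |s| ≤ u + 2 * D := by
    simpa [prefixDisc_zero, unqBelow_zero] using H 0 n (Nat.zero_le n) le_rfl
  obtain ⟨T, hT, hT0, hTu, hTgood⟩ := exists_good_walk (prefixDisc h) (unqBelow h)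
    (prefixDisc_zero h) (unqBelow_zero h) (by omega) hpar H
  obtain ⟨j, hjn, hj⟩ := exists_eq_of_succ_le (U := unqBelow h) (k := D + 4)
    (fun j hj => by rw [unqBelow_succ h hj]; split_ifs <;> omega)
    (by simp [unqBelow_zero]) (by omega)
  obtain ⟨T', hT', hT'0, hT'u, hT'bad⟩ :=
    exists_walk_far u (D + 4) s (prefixDisc h j) (by omega) hpar
  refine ⟨completion h T, completion h T', card_completion h hx hT hT0 hTu,
    card_completion h hx hT' hT'0 hT'u,
    agrees_completion h hx T, agrees_completion h hx T', fun i hi => ?_, fun hgood => ?_⟩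
  · rw [mem_Icc] at hi
    rw [hkey hT hi.2, hT0, sub_zero]
    have := hTgood i hi.2
    push_cast; omega
  · have hj1 : 1 ≤ j := Nat.pos_of_ne_zero fun h0 => by simp [h0, unqBelow_zero] at hj
    have := hgood j (mem_Icc.2 ⟨hj1, hjn⟩)
    rw [hkey hT' hjn, hT'0, sub_zero, hj] at this
    push_cast at this hT'bad
    omega

section Game

variable {n : ℕ} (σ : SgStrategy n)

lemma boardVal_cons (q : Fin n) (v : ℤ) (h : List (Fin n × ℤ)) (p : Fin n) :
    boardVal ((q, v) :: h) p = if q = p then v else boardVal h p := by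
  unfold boardVal
  split_ifs with hqp <;> simp [List.find?, hqp]

lemma boardVal_playHist_of_not_mem {qs : List (Fin n)} {p : Fin n} (hp : p ∉ qs) :
    boardVal (playHist σ qs) p = 0 := by
  induction qs with
  | nil => rfl
  | cons q qs ih =>
    rw [List.mem_cons, not_or] at hp
    rw [playHist, boardVal_cons, if_neg (Ne.symm hp.1), ih hp.2]

lemma boardVal_playHist_of_mem (hσ : ValidStrategy σ) {qs : List (Fin n)} {p : Fin n}
    (hp : p ∈ qs) : boardVal (playHist σ qs) p = 1 ∨ boardVal (playHist σ qs) p = -1 := by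
  induction qs with
  | nil => simp at hp
  | cons q qs ih =>
    rw [playHist, boardVal_cons]
    split_ifs with hqp
    · exact hσ _ _
    · exact ih ((List.mem_cons.1 hp).resolve_left (Ne.symm hqp))

lemma boardVal_playHist_of_suffix {qs qs' : List (Fin n)} (hsuf : qs <:+ qs') (hnd : qs'.Nodup)
    {p : Fin n} (hp : p ∈ qs) :
    boardVal (playHist σ qs') p = boardVal (playHist σ qs) p := by
  obtain ⟨l, rfl⟩ := hsuf
  induction l with
  | nil => rfl
  | cons q l ih =>
    rw [List.cons_append, List.nodup_cons] at hnd
    rw [List.cons_append, playHist, boardVal_cons,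
      if_neg (fun hqp : q = p => hnd.1 (hqp ▸ List.mem_append_right l hp)), ih hnd.2]

lemma le_unqBelow_playHist_add_length (hσ : ValidStrategy σ) (qs : List (Fin n)) :
    n ≤ unqBelow (playHist σ qs) n + qs.length := by
  have hunq : {p ∈ unqueried (playHist σ qs) | p.val < n} = qs.toFinsetᶜ := by
    ext p
    simp only [unqueried, mem_filter, mem_univ, true_and, p.isLt, and_true, mem_compl,
      List.mem_toFinset]
    exact ⟨fun h0 hp => by rcases boardVal_playHist_of_mem σ hσ hp with h1 | h1 <;> omega,
      boardVal_playHist_of_not_mem σ⟩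
  rw [unqBelow, hunq, card_compl, Fintype.card_fin]
  have := qs.toFinset_card_le
  omega

end Game

namespace DecTree

variable {n : ℕ} (σ : SgStrategy n)

/-- The positions played when `T` is run against `σ` after `qs`, most recent first; a repeated
query is answered from the board, not by `σ`. -/
def queriesAgainst : DecTree n → List (Fin n) → List (Fin n)
  | leaf _, qs => qs
  | node i t0 t1, qs =>
    if boardVal (playHist σ (qs.insert i)) i = 1 then t1.queriesAgainst (qs.insert i)
    else t0.queriesAgainst (qs.insert i)

lemma suffix_queriesAgainst (T : DecTree n) (qs : List (Fin n)) :
    qs <:+ T.queriesAgainst σ qs := by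
  induction T generalizing qs with
  | leaf => exact List.suffix_refl qs
  | node i t0 t1 ih0 ih1 =>
    rw [queriesAgainst]
    split_ifs
    exacts [(List.suffix_insert i qs).trans (ih1 _), (List.suffix_insert i qs).trans (ih0 _)]

lemma length_queriesAgainst_le (T : DecTree n) (qs : List (Fin n)) :
    (T.queriesAgainst σ qs).length ≤ T.depth + qs.length := by
  induction T generalizing qs with
  | leaf => simp [queriesAgainst, depth]
  | node i t0 t1 ih0 ih1 =>
    have hlen : (qs.insert i).length ≤ qs.length + 1 := by
      rw [List.length_insert]; split_ifs <;> omega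
    rw [queriesAgainst, depth]
    split_ifs
    · have := ih1 (qs.insert i); omega
    · have := ih0 (qs.insert i); omega

lemma nodup_queriesAgainst (T : DecTree n) {qs : List (Fin n)} (hqs : qs.Nodup) :
    (T.queriesAgainst σ qs).Nodup := by
  induction T generalizing qs with
  | leaf => exact hqs
  | node i t0 t1 ih0 ih1 =>
    rw [queriesAgainst]
    split_ifs
    exacts [ih1 hqs.insert, ih0 hqs.insert]

lemma mem_iff_of_agrees {qs L : List (Fin n)} (hsuf : qs <:+ L) (hL : L.Nodup)
    (hσ : ValidStrategy σ) {A : Finset (Fin n)} (hA : Agrees (playHist σ L) A) {p : Fin n}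
    (hp : p ∈ qs) : p ∈ A ↔ boardVal (playHist σ qs) p = 1 := by
  have hval := boardVal_playHist_of_suffix σ hsuf hL hp
  rw [hA.mem_iff (by rcases boardVal_playHist_of_mem σ hσ (hsuf.subset hp) with h | h <;> omega),
    hval]

lemma eval_eq_of_agrees (hσ : ValidStrategy σ) (T : DecTree n) {qs : List (Fin n)}
    (hqs : qs.Nodup) {A B : Finset (Fin n)} (hA : Agrees (playHist σ (T.queriesAgainst σ qs)) A)
    (hB : Agrees (playHist σ (T.queriesAgainst σ qs)) B) : T.eval A = T.eval B := by
  induction T generalizing qs with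
  | leaf => rfl
  | node i t0 t1 ih0 ih1 =>
    have hi : i ∈ qs.insert i := List.mem_insert_self
    have hmem {t : DecTree n} {C : Finset (Fin n)}
        (hC : Agrees (playHist σ (t.queriesAgainst σ (qs.insert i))) C) :=
      mem_iff_of_agrees σ (suffix_queriesAgainst σ t _) (nodup_queriesAgainst σ t hqs.insert) hσ
        hC hi
    rw [queriesAgainst] at hA hB
    split_ifs at hA hB with hb
    · simp only [eval, hmem hA, hmem hB, hb, if_true]
      exact ih1 hqs.insert hA hB
    · simp only [eval, hmem hA, hmem hB, hb, if_false]
      exact ih0 hqs.insert hA hB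

lemma exists_eval_eq_inter (s : Finset (Fin n)) :
    ∀ g : Finset (Fin n) → Bool, ∃ T : DecTree n, ∀ A, T.eval A = g (A ∩ s) := by
  induction s using Finset.induction_on with
  | empty => exact fun g => ⟨leaf (g ∅), fun A => by simp [eval]⟩
  | insert a s _ ih =>
    intro g
    obtain ⟨T0, h0⟩ := ih g
    obtain ⟨T1, h1⟩ := ih fun B => g (insert a B)
    refine ⟨node a T0 T1, fun A => ?_⟩
    by_cases ha : a ∈ A <;> simp [eval, ha, h0, h1, inter_insert_of_mem, inter_insert_of_notMem]

end DecTree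

theorem sub_le_depth_of_computes_discMaxFun {n D : ℕ} (hn : Even n) {σ : SgStrategy n}
    (hσ : ValidStrategy σ)
    (hgame : ∀ qs : List (Fin n), qs.Nodup → ∀ i j : ℕ, i ≤ j → j < n →
      2 * |intervalDisc (playHist σ qs) i j| - (intervalUnq (playHist σ qs) i j : ℤ) ≤ 2 * (D : ℤ))
    {T : DecTree n} (hT : Computes T fun A : Slice n (n / 2) => discMaxFun n (D + 3) A.val) :
    n - 6 * (D + 3) ≤ T.depth := by
  by_contra! hdepth
  set qs := T.queriesAgainst σ []
  have hqs : qs.Nodup := T.nodup_queriesAgainst σ List.nodup_nil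
  have hlen : qs.length ≤ T.depth := by simpa using T.length_queriesAgainst_le σ []
  have hunq := le_unqBelow_playHist_add_length σ hσ qs
  obtain ⟨A, B, hAcard, hBcard, hA, hB, hAdisc, hBdisc⟩ :=
    exists_agrees_discMaxProp_and_not hn (playHist σ qs)
      (fun p => by
        by_cases hp : p ∈ qs
        · exact .inr (boardVal_playHist_of_mem σ hσ hp)
        · exact .inl (boardVal_playHist_of_not_mem σ hp))
      (by omega) fun a b hab hb => prefix_bound_of_interval_bound _ (hgame qs hqs) hab hb
  have hAB := T.eval_eq_of_agrees σ hσ List.nodup_nil hA hB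
  have hAtrue := hT ⟨A, hAcard⟩
  have hBfalse := hT ⟨B, hBcard⟩
  simp only [discMaxFun, decide_eq_true hAdisc, decide_eq_false hBdisc] at hAtrue hBfalse
  rw [← hAB, hAtrue] at hBfalse
  exact Bool.noConfusion hBfalse

/-- If Signgiver has a strategy in the prefix-discrepancy game on `[n]` (`n`
even) guaranteeing at every time, for every interval `[i,j]`,
`|disc(i,j)| - unq(i,j)/2 ≤ D'` (written `2·|disc| - unq ≤ 2·D'`; so the
modified game value satisfies `d'(n) ≤ D'`), then for `d = D' + 3` the function
`Disc-max-d` on the middle slice satisfies `E_{n/2}(Disc-max-d) ≤ 6d`, i.e. its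
deterministic query complexity is at least `n - 6(D' + 3)`. -/
theorem stmt_16 (n D' : ℕ) (hn : Even n)
    (hσ : ∃ σ : SgStrategy n, ValidStrategy σ ∧
      ∀ qs : List (Fin n), qs.Nodup →
        ∀ i j : ℕ, i ≤ j → j < n →
          2 * |intervalDisc (playHist σ qs) i j| -
              (intervalUnq (playHist σ qs) i j : ℤ) ≤ 2 * (D' : ℤ)) :
    n - Dquery n (n / 2) (fun A => discMaxFun n (D' + 3) A.val) ≤ 6 * (D' + 3) ∧
    n - 6 * (D' + 3) ≤ Dquery n (n / 2) (fun A => discMaxFun n (D' + 3) A.val) := by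
  obtain ⟨σ, hσ, hgame⟩ := hσ
  obtain ⟨T₀, hT₀⟩ := DecTree.exists_eval_eq_inter univ (discMaxFun n (D' + 3))
  obtain ⟨T, hTdepth, hT⟩ := Nat.sInf_mem (s := {d | ∃ T : DecTree n, T.depth ≤ d ∧
      Computes T fun A : Slice n (n / 2) => discMaxFun n (D' + 3) A.val})
    ⟨T₀.depth, T₀, le_rfl, fun A => by simp [hT₀]⟩
  have := sub_le_depth_of_computes_discMaxFun hn hσ hgame hT
  unfold Dquery
  omega
end

section
/- For all integers 1 ≤ k ≤ n, one has D_k(n) ≥ D_{k−1}(n−1); equivalently, E_k(n) ≤ E_{k−1}(n−1) + 1. -/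
def buildT {n : ℕ} : (m : ℕ) → m ≤ n → (Finset (Fin n) → Bool) → DecTree n
  | 0, _, F => .leaf (F ∅)
  | m+1, h, F =>
      .node ⟨m, h⟩ (buildT m (Nat.le_of_succ_le h) F)
        (buildT m (Nat.le_of_succ_le h) (fun S => F (insert ⟨m, h⟩ S)))

lemma depth_buildT {n : ℕ} (m : ℕ) (h : m ≤ n) (F : Finset (Fin n) → Bool) :
    (buildT m h F).depth ≤ m := by
  induction m generalizing F with
  | zero => simp [buildT, DecTree.depth]
  | succ m ih =>
      have h1 := ih (Nat.le_of_succ_le h) F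
      have h2 := ih (Nat.le_of_succ_le h) (fun S => F (insert ⟨m, h⟩ S))
      simp only [buildT, DecTree.depth]
      omega
      
lemma eval_buildT {n : ℕ} (m : ℕ) (h : m ≤ n) (F : Finset (Fin n) → Bool)
    (A : Finset (Fin n)) :
    (buildT m h F).eval A = F (A.filter (fun i => i.val < m)) := by
  induction m generalizing F with
  | zero => simp [buildT, DecTree.eval]
  | succ m ih =>
      have key : A.filter (fun i => i.val < m + 1) =
          if (⟨m, h⟩ : Fin n) ∈ A then insert ⟨m, h⟩ (A.filter (fun i => i.val < m))
          else A.filter (fun i => i.val < m) := by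
        split <;> rename_i hm
        · ext x
          simp only [Finset.mem_filter, Finset.mem_insert]
          constructor
          · rintro ⟨hx, hlt⟩
            rcases Nat.lt_succ_iff_lt_or_eq.1 hlt with h' | h'
            · exact Or.inr ⟨hx, h'⟩
            · exact Or.inl (Fin.ext h')
          · rintro (rfl | ⟨hx, hlt⟩)
            · exact ⟨hm, Nat.lt_succ_self m⟩
            · exact ⟨hx, Nat.lt_succ_of_lt hlt⟩
        · ext x
          simp only [Finset.mem_filter]
          constructor
          · rintro ⟨hx, hlt⟩
            refine ⟨hx, ?_⟩
            rcases Nat.lt_succ_iff_lt_or_eq.1 hlt with h' | h'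
            · exact h'
            · exact ((hm ((Fin.ext h' : x = ⟨m, h⟩) ▸ hx)).elim)
          · rintro ⟨hx, hlt⟩
            exact ⟨hx, Nat.lt_succ_of_lt hlt⟩
      simp only [buildT, DecTree.eval, ih, key]
      split <;> rfl

lemma dquery_le (n k : ℕ) (f : Slice n k → Bool) : Dquery n k f ≤ n := by
  apply Nat.sInf_le
  refine ⟨buildT n le_rfl (fun S => if h : S.card = k then f ⟨S, h⟩ else false),
    depth_buildT n le_rfl _, ?_⟩
  intro A
  rw [eval_buildT]
  have : (A.val.filter (fun i => i.val < n)) = A.val := by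
    apply Finset.filter_true_of_mem
    intro x _
    exact x.isLt
  rw [this, dif_pos A.prop]
  exact congrArg f (Subtype.ext rfl)

lemma dmax_bdd (n k : ℕ) : BddAbove {d : ℕ | ∃ f : Slice n k → Bool, Dquery n k f = d} := by
  refine ⟨n, ?_⟩
  rintro d ⟨f, rfl⟩
  exact dquery_le n k f

/- lift a subset of [m] to a (k+1)-subset of [m+1] by adding the last element -/
def up {m : ℕ} (A : Finset (Fin m)) : Finset (Fin (m+1)) :=
  insert (Fin.last m) (A.map ⟨Fin.castSucc, Fin.castSucc_injective m⟩)

lemma last_not_mem_map {m : ℕ} (A : Finset (Fin m)) :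
    Fin.last m ∉ A.map ⟨Fin.castSucc, Fin.castSucc_injective m⟩ := by
  simp only [Finset.mem_map, Function.Embedding.coeFn_mk, not_exists]
  rintro x ⟨_, hx⟩
  exact absurd hx (Fin.castSucc_lt_last x).ne

lemma card_up {m : ℕ} (A : Finset (Fin m)) : (up A).card = A.card + 1 := by
  rw [up, Finset.card_insert_of_notMem (last_not_mem_map A), Finset.card_map]

lemma mem_up_last {m : ℕ} (A : Finset (Fin m)) : Fin.last m ∈ up A :=
  Finset.mem_insert_self _ _

lemma mem_up_castSucc {m : ℕ} (A : Finset (Fin m)) (i : Fin m) :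
    Fin.castSucc i ∈ up A ↔ i ∈ A := by
  simp only [up, Finset.mem_insert, Finset.mem_map, Function.Embedding.coeFn_mk]
  constructor
  · rintro (h | ⟨x, hx, he⟩)
    · exact absurd h (Fin.castSucc_lt_last i).ne
    · rwa [← Fin.castSucc_injective m he]
  · intro h
    exact Or.inr ⟨i, h, rfl⟩

noncomputable def down {m : ℕ} (B : Finset (Fin (m+1))) : Finset (Fin m) :=
  B.preimage Fin.castSucc (Set.injOn_of_injective (Fin.castSucc_injective m))

lemma down_up {m : ℕ} (A : Finset (Fin m)) : down (up A) = A := by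
  ext x
  simp [down, Finset.mem_preimage, mem_up_castSucc]

def transform {m : ℕ} : DecTree (m+1) → DecTree m
  | .leaf b => .leaf b
  | .node i t0 t1 =>
      if h : i.val < m then .node ⟨i.val, h⟩ (transform t0) (transform t1)
      else transform t1

lemma depth_transform {m : ℕ} (T : DecTree (m+1)) :
    (transform T).depth ≤ T.depth := by
  induction T with
  | leaf b => exact le_rfl
  | node i t0 t1 ih0 ih1 =>
      simp only [transform]
      split
      · simp only [DecTree.depth]
        omega
      · simp only [DecTree.depth]
        omega

lemma eval_transform {m : ℕ} (T : DecTree (m+1)) (A : Finset (Fin m)) :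
    (transform T).eval A = T.eval (up A) := by
  induction T with
  | leaf b => rfl
  | node i t0 t1 ih0 ih1 =>
      simp only [transform]
      split <;> rename_i h
      · have hmem : i ∈ up A ↔ (⟨i.val, h⟩ : Fin m) ∈ A := by
          conv_lhs => rw [show i = Fin.castSucc ⟨i.val, h⟩ from Fin.ext rfl]
          exact mem_up_castSucc A ⟨i.val, h⟩
        simp only [DecTree.eval, ih0, ih1, hmem]
      · have hi : i = Fin.last m := by
          apply Fin.ext
          have := i.isLt
          simp only [Fin.val_last]
          omega
        simp only [DecTree.eval, ih1, hi, if_pos (mem_up_last A)]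

lemma dmax_step (m j : ℕ) : Dmax m j ≤ Dmax (m+1) (j+1) := by
  apply csSup_le
  · exact ⟨Dquery m j (fun _ => false), fun _ => false, rfl⟩
  rintro d ⟨f, rfl⟩
  -- define g on the bigger slice
  set g : Slice (m+1) (j+1) → Bool :=
    fun B => if h : (down B.val).card = j then f ⟨down B.val, h⟩ else false with hg
  -- get an optimal tree for g
  have hne : {d : ℕ | ∃ T : DecTree (m+1), T.depth ≤ d ∧ Computes T g}.Nonempty := by
    refine ⟨m+1, buildT (m+1) le_rfl
      (fun S => if h : S.card = j+1 then g ⟨S, h⟩ else false),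
      depth_buildT _ le_rfl _, ?_⟩
    intro A
    rw [eval_buildT]
    have : (A.val.filter (fun i => i.val < m+1)) = A.val :=
      Finset.filter_true_of_mem (fun x _ => x.isLt)
    rw [this, dif_pos A.prop]
  obtain ⟨T, hT, hTg⟩ := Nat.sInf_mem hne
  -- transform computes f
  have hcard : ∀ A : Slice m j, (up A.val).card = j + 1 := fun A => by
    rw [card_up, A.prop]
  have hcomp : Computes (transform T) f := by
    intro A
    rw [eval_transform, hTg ⟨up A.val, hcard A⟩]
    have hd : (down (up A.val)).card = j := by rw [down_up]; exact A.prop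
    rw [hg]
    simp only
    rw [dif_pos hd]
    congr 1
    exact Subtype.ext (down_up A.val)
  have h1 : Dquery m j f ≤ Dquery (m+1) (j+1) g :=
    Nat.sInf_le ⟨transform T, le_trans (depth_transform T) hT, hcomp⟩
  exact le_trans h1 (le_csSup (dmax_bdd (m+1) (j+1)) ⟨g, rfl⟩)

/-- For all `1 ≤ k ≤ n`, one has `D_k(n) ≥ D_{k-1}(n-1)`, equivalently
`E_k(n) ≤ E_{k-1}(n-1) + 1`. -/
theorem stmt_17 (k n : ℕ) (h₁ : 1 ≤ k) (h₂ : k ≤ n) :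
    Dmax (n - 1) (k - 1) ≤ Dmax n k ∧ Equery n k ≤ Equery (n - 1) (k - 1) + 1 := by
  obtain ⟨m, rfl⟩ : ∃ m, n = m + 1 := ⟨n - 1, by omega⟩
  obtain ⟨j, rfl⟩ : ∃ j, k = j + 1 := ⟨k - 1, by omega⟩
  simp only [Nat.add_sub_cancel]
  have h := dmax_step m j
  refine ⟨h, ?_⟩
  simp only [Equery]
  omega
end

section
/- Let n, n′, ℓ be integers with n′ odd, 0 ≤ ℓ ≤ n′, and n′ < n. Then binom(n−ℓ, ⌊(n−ℓ)/2⌋) · binom(n′, ⌊n′/2⌋) ≤ binom(n′−ℓ, ⌊(n′−ℓ)/2⌋) · binom(n, ⌊n/2⌋); that is, the ratio binom(n−ℓ, ⌊(n−ℓ)/2⌋) / binom(n, ⌊n/2⌋) is at most binom(n′−ℓ, ⌊(n′−ℓ)/2⌋) / binom(n′, ⌊n′/2⌋). -/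
private def fc (m : ℕ) : ℕ := Nat.choose m (m / 2)

private lemma fc_pos (m : ℕ) : 0 < fc m := Nat.choose_pos (Nat.div_le_self _ _)

private lemma double_eq (k : ℕ) : Nat.choose (2*k+2) (k+1) = 2 * Nat.choose (2*k+1) k := by
  have h1 : Nat.choose (2*k+1) (k+1) = Nat.choose (2*k+1) k := by
    have := (Nat.choose_symm (n := 2*k+1) (k := k+1) (by omega)).symm
    simpa [show 2*k+1 - (k+1) = k by omega] using this
  rw [Nat.choose_succ_succ']
  omega

private lemma fc_succ_le (s : ℕ) : fc (s+1) ≤ 2 * fc s := by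
  unfold fc
  rcases h : (s+1)/2 with _ | j
  · have := Nat.choose_pos (n := s) (k := s/2) (Nat.div_le_self _ _)
    simp only [Nat.choose_zero_right]
    omega
  · rw [Nat.choose_succ_succ']
    have h1 : Nat.choose s j ≤ Nat.choose s (s/2) := Nat.choose_le_middle j s
    have h2 : Nat.choose s (j+1) ≤ Nat.choose s (s/2) := Nat.choose_le_middle _ s
    omega

private lemma fc_step2 (s : ℕ) :
    fc (s+2) * ((s+3)/2) = (4 * ((s+3)/2) - 2) * fc s := by
  unfold fc
  rcases Nat.even_or_odd s with ⟨k, hk⟩ | ⟨k, hk⟩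
  · subst hk
    have e1 : (k+k+2)/2 = k+1 := by omega
    have e2 : (k+k+3)/2 = k+1 := by omega
    have e3 : (k+k)/2 = k := by omega
    rw [e1, e2, e3]
    have h := Nat.succ_mul_centralBinom_succ k
    simp only [Nat.centralBinom, Nat.succ_eq_add_one] at h
    rw [show 2*(k+1) = k+k+2 by omega, show 2*k = k+k by omega] at h
    rw [show 4*(k+1)-2 = 2*(k+k+1) by omega, mul_comm]
    exact h
  · subst hk
    have e1 : (2*k+1+2)/2 = k+1 := by omega
    have e2 : (2*k+1+3)/2 = k+2 := by omega
    have e3 : (2*k+1)/2 = k := by omega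
    rw [e1, e2, e3]
    have hsymm : Nat.choose (2*k+3) (k+1) = Nat.choose (2*k+3) (k+2) := by
      have := Nat.choose_symm (n := 2*k+3) (k := k+2) (by omega)
      simpa [show 2*k+3 - (k+2) = k+1 by omega] using this
    have hmul := Nat.add_one_mul_choose_eq (2*k+2) (k+1)
    have hd := double_eq k
    rw [show 2*k+1+2 = 2*k+3 by omega, hsymm]
    rw [show 2*k+2+1 = 2*k+3 by omega] at hmul
    -- hmul : (2*k+3) * C(2*k+2, k+1) = C(2*k+3, k+2) * (k+2)
    rw [show 4*(k+2)-2 = 2*(2*k+3) by omega]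
    calc Nat.choose (2*k+3) (k+2) * (k+2)
        = (2*k+3) * Nat.choose (2*k+2) (k+1) := hmul.symm
      _ = (2*k+3) * (2 * Nat.choose (2*k+1) k) := by rw [hd]
      _ = 2*(2*k+3) * Nat.choose (2*k+1) k := by ring

private lemma step2 (m ℓ : ℕ) (h : ℓ ≤ m) :
    fc (m + 2 - ℓ) * fc m ≤ fc (m - ℓ) * fc (m + 2) := by
  have hm : m + 2 - ℓ = (m - ℓ) + 2 := by omega
  rw [hm]
  set s := m - ℓ with hs
  have hs1 := fc_step2 s
  have hm1 := fc_step2 m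
  set cs := (s+3)/2 with hcs
  set cm := (m+3)/2 with hcm
  have hle : cs ≤ cm := Nat.div_le_div_right (by omega)
  have hcs1 : 1 ≤ cs := by rw [hcs]; omega
  have hcm1 : 1 ≤ cm := by rw [hcm]; omega
  refine Nat.le_of_mul_le_mul_right ?_ (show 0 < cs * cm by positivity)
  have key : (4*cs-2) * cm ≤ (4*cm-2) * cs := by
    zify [show 2 ≤ 4*cs by omega, show 2 ≤ 4*cm by omega]
    nlinarith [hle, hcs1]
  calc fc (s+2) * fc m * (cs * cm)
      = (fc (s+2) * cs) * (fc m * cm) := by ring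
    _ = ((4*cs-2) * fc s) * (fc m * cm) := by rw [hs1]
    _ = ((4*cs-2) * cm) * (fc s * fc m) := by ring
    _ ≤ ((4*cm-2) * cs) * (fc s * fc m) := Nat.mul_le_mul_right _ key
    _ = ((4*cm-2) * fc m) * (fc s * cs) := by ring
    _ = (fc (m+2) * cm) * (fc s * cs) := by rw [← hm1]
    _ = fc s * fc (m+2) * (cs * cm) := by ring

private lemma step1 (m ℓ : ℕ) (hodd : Odd m) (h : ℓ ≤ m) :
    fc (m + 1 - ℓ) * fc m ≤ fc (m - ℓ) * fc (m + 1) := by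
  obtain ⟨k, rfl⟩ := hodd
  have hdb : fc (2*k+1+1) = 2 * fc (2*k+1) := by
    unfold fc
    have e1 : (2*k+1+1)/2 = k+1 := by omega
    have e2 : (2*k+1)/2 = k := by omega
    rw [e1, e2, show 2*k+1+1 = 2*k+2 from rfl, double_eq]
  have hm : 2*k+1 + 1 - ℓ = (2*k+1 - ℓ) + 1 := by omega
  rw [hm, hdb]
  calc fc ((2*k+1-ℓ)+1) * fc (2*k+1) ≤ (2 * fc (2*k+1-ℓ)) * fc (2*k+1) :=
        Nat.mul_le_mul_right _ (fc_succ_le _)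
    _ = fc (2*k+1-ℓ) * (2 * fc (2*k+1)) := by ring

private lemma main_lemma (n' ℓ : ℕ) (hodd : Odd n') (hℓ : ℓ ≤ n') :
    ∀ d : ℕ, fc (n' + d - ℓ) * fc n' ≤ fc (n' - ℓ) * fc (n' + d) := by
  intro d
  induction d using Nat.strong_induction_on with
  | _ d ih =>
    match d with
    | 0 => simp
    | 1 => exact step1 n' ℓ hodd hℓ
    | (d+2) =>
      have h1 := ih d (by omega)
      have h2 := step2 (n'+d) ℓ (by omega)
      rw [show n'+d+2-ℓ = n'+(d+2)-ℓ by omega, show n'+d+2 = n'+(d+2) by omega] at h2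
      have hpos := fc_pos (n'+d)
      refine Nat.le_of_mul_le_mul_right ?_ hpos
      calc fc (n'+(d+2)-ℓ) * fc n' * fc (n'+d)
          = (fc (n'+(d+2)-ℓ) * fc (n'+d)) * fc n' := by ring
        _ ≤ (fc (n'+d-ℓ) * fc (n'+(d+2))) * fc n' := Nat.mul_le_mul_right _ h2
        _ = (fc (n'+d-ℓ) * fc n') * fc (n'+(d+2)) := by ring
        _ ≤ (fc (n'-ℓ) * fc (n'+d)) * fc (n'+(d+2)) := Nat.mul_le_mul_right _ h1
        _ = fc (n'-ℓ) * fc (n'+(d+2)) * fc (n'+d) := by ring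

/-- For `n'` odd, `0 ≤ ℓ ≤ n'` and `n' < n`, the ratio of central binomial
coefficients satisfies
`binom(n-ℓ, ⌊(n-ℓ)/2⌋) / binom(n, ⌊n/2⌋) ≤ binom(n'-ℓ, ⌊(n'-ℓ)/2⌋) / binom(n', ⌊n'/2⌋)`,
stated multiplicatively over ℕ. -/
theorem stmt_19 (n n' ℓ : ℕ) (hodd : Odd n') (hℓ : ℓ ≤ n') (hn : n' < n) :
    Nat.choose (n - ℓ) ((n - ℓ) / 2) * Nat.choose n' (n' / 2) ≤
      Nat.choose (n' - ℓ) ((n' - ℓ) / 2) * Nat.choose n (n / 2) := by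
  have h := main_lemma n' ℓ hodd hℓ (n - n')
  rw [show n' + (n - n') = n by omega] at h
  exact h
end
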